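/- For n ≥ 6, the positive co-degree Turán number of C5 satisfies: co^+ex(n, C5) = 2k if n ∈ {4k, 4k+1, 4k+2}, and co^+ex(n, C5) = 2k+1 if n = 4k+3. -/

import Mathlib

/-!
For a `K4` `pqrs` write `L_xy = link E x y`, `A_p = Aset E q r s` and `B_p = Bset E p q r s`.

Lower bound: in the balanced blow-up of `K4^(3)` any five vertices spanning a `C5` pairwise share
an edge and would need five colours, and a nonempty link is the union of two colour classes.

Upper bound: let `E` be `C5`-free with positive co-degree at least `δ`. If `n ≤ 2δ` there is a
`K4`, since otherwise the common link `L_ab ∩ L_ac` of an edge `abc` can be enlarged forever.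
At a `K4` `abcd`, `C5`-freeness makes `L_ab ∩ L_cd` disjoint from `L_ac ∪ L_bd`; counting this
for the pairings `ab | cd` and `ac | bd` gives `2δ ≤ n`. If `n = 2δ`, opposite links of every
`K4` are complementary, so the vertices split into the classes `A_x`, `B_x` (`x ∈ {p, q, r, s}`)
according to their links with `p`. At most one `B_x`, say `B_p`, is nonempty; then
`|B_p| = δ - 2|A_q|` and the link graphs of `p` and `q` are regular on `B_p` of degrees
`δ - 3|A_q|` and `|A_q|`, so the handshake lemma forces `δ` to be even.
-/

open Finset

/-- The link (co-neighborhood) of the pair `{u,v}`: all `w` with `{u,v,w}` an edge. -/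
def link {n : ℕ} (E : Finset (Finset (Fin n))) (u v : Fin n) : Finset (Fin n) :=
  Finset.univ.filter (fun w => ({u, v, w} : Finset (Fin n)) ∈ E)

/-- `E` is the edge set of a 3-graph: every edge has exactly 3 vertices. -/
def isEdgeSet {n : ℕ} (E : Finset (Finset (Fin n))) : Prop := ∀ e ∈ E, e.card = 3

/-- `E` contains a copy of `C5⁻ = {abc, bcd, cde, dea}`. -/
def hasC5minus {n : ℕ} (E : Finset (Finset (Fin n))) : Prop :=
  ∃ a b c d e : Fin n,
    a ≠ b ∧ a ≠ c ∧ a ≠ d ∧ a ≠ e ∧ b ≠ c ∧ b ≠ d ∧ b ≠ e ∧ c ≠ d ∧ c ≠ e ∧ d ≠ e ∧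
    ({a, b, c} : Finset (Fin n)) ∈ E ∧ ({b, c, d} : Finset (Fin n)) ∈ E ∧
    ({c, d, e} : Finset (Fin n)) ∈ E ∧ ({d, e, a} : Finset (Fin n)) ∈ E

/-- `E` contains a copy of `C5 = {abc, bcd, cde, dea, eab}`. -/
def hasC5 {n : ℕ} (E : Finset (Finset (Fin n))) : Prop :=
  ∃ a b c d e : Fin n,
    a ≠ b ∧ a ≠ c ∧ a ≠ d ∧ a ≠ e ∧ b ≠ c ∧ b ≠ d ∧ b ≠ e ∧ c ≠ d ∧ c ≠ e ∧ d ≠ e ∧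
    ({a, b, c} : Finset (Fin n)) ∈ E ∧ ({b, c, d} : Finset (Fin n)) ∈ E ∧
    ({c, d, e} : Finset (Fin n)) ∈ E ∧ ({d, e, a} : Finset (Fin n)) ∈ E ∧
    ({e, a, b} : Finset (Fin n)) ∈ E

/-- `a, b, c, d` form a `K4` in `E`: all four triples among them are edges. -/
def isK4 {n : ℕ} (E : Finset (Finset (Fin n))) (a b c d : Fin n) : Prop :=
  a ≠ b ∧ a ≠ c ∧ a ≠ d ∧ b ≠ c ∧ b ≠ d ∧ c ≠ d ∧
  ({a, b, c} : Finset (Fin n)) ∈ E ∧ ({a, b, d} : Finset (Fin n)) ∈ E ∧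
  ({a, c, d} : Finset (Fin n)) ∈ E ∧ ({b, c, d} : Finset (Fin n)) ∈ E

/-- `E` contains a copy of `K4⁻ = {abc, abd, acd}`. -/
def hasK4minus {n : ℕ} (E : Finset (Finset (Fin n))) : Prop :=
  ∃ a b c d : Fin n, a ≠ b ∧ a ≠ c ∧ a ≠ d ∧ b ≠ c ∧ b ≠ d ∧ c ≠ d ∧
    ({a, b, c} : Finset (Fin n)) ∈ E ∧ ({a, b, d} : Finset (Fin n)) ∈ E ∧
    ({a, c, d} : Finset (Fin n)) ∈ E

/-- `A`-set of a `K4`: intersection of the three pairwise links of `{x, y, z}`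
(the set `A_w` for the fourth vertex `w` of the `K4`). -/
def Aset {n : ℕ} (E : Finset (Finset (Fin n))) (x y z : Fin n) : Finset (Fin n) :=
  link E x y ∩ link E y z ∩ link E z x

/-- `B`-set of a `K4`: `B_w = N(w,x) ∩ N(w,y) ∩ N(w,z)`. -/
def Bset {n : ℕ} (E : Finset (Finset (Fin n))) (w x y z : Fin n) : Finset (Fin n) :=
  link E w x ∩ link E w y ∩ link E w z

section Counting

variable {α : Type*} [DecidableEq α] {A B X Y Z : Finset α}

lemma card_add_card_add_card_le [Fintype α] (h : Disjoint A (X ∪ Y)) :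
    #A + #X + #Y ≤ Fintype.card α + #(X ∩ Y) := by
  have := card_union_add_card_inter X Y
  have := card_union_of_disjoint h
  have := card_le_univ (A ∪ (X ∪ Y))
  omega

lemma union_eq_univ_of_card_le [Fintype α] (h : Disjoint A B)
    (hcard : Fintype.card α ≤ #A + #B) : A ∪ B = univ :=
  eq_univ_of_card _ (le_antisymm (card_le_univ _) (card_union_of_disjoint h ▸ hcard))

lemma card_union_add_two_mul (hXY : X ∩ Y = A) (hXZ : X ∩ Z = A) (hYZ : Y ∩ Z = A) :
    #(X ∪ Y ∪ Z) + 2 * #A = #X + #Y + #Z := by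
  have hXY' := card_union_add_card_inter X Y
  have hXYZ := card_union_add_card_inter (X ∪ Y) Z
  rw [hXY] at hXY'
  rw [union_inter_distrib_right, hXZ, hYZ, union_self] at hXYZ
  omega

/-- The handshake lemma for the graph induced by `R` on `B`. -/
lemma even_card_mul_of_forall_card_filter_eq {α : Type*} [Fintype α] [DecidableEq α]
    {R : α → α → Prop} [DecidableRel R] (hsymm : ∀ v w, R v w → R w v) (hirrefl : ∀ v, ¬ R v v)
    {B : Finset α} {c : ℕ} (hc : ∀ v ∈ B, #{w ∈ B | R v w} = c) : Even (#B * c) := by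
  let G : SimpleGraph α :=
    { Adj := fun v w => v ∈ B ∧ w ∈ B ∧ R v w
      symm := ⟨fun _ _ ⟨hv, hw, h⟩ => ⟨hw, hv, hsymm _ _ h⟩⟩
      loopless := ⟨fun v ⟨_, _, h⟩ => hirrefl v h⟩ }
  have hdeg : ∀ v, G.degree v = if v ∈ B then c else 0 := by
    intro v
    rw [← G.card_neighborFinset_eq_degree]
    split_ifs with hv
    · rw [← hc v hv]
      congr 1
      ext w
      simp [G, hv]
    · rw [card_eq_zero, eq_empty_iff_forall_notMem]
      simp [G, hv]
  have := G.sum_degrees_eq_twice_card_edges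
  simp only [hdeg, sum_ite_mem, univ_inter, sum_const, smul_eq_mul] at this
  exact ⟨#G.edgeFinset, by omega⟩

end Counting

variable {n : ℕ} {E : Finset (Finset (Fin n))} {a b c d e s t u v w x y z : Fin n}

@[simp]
lemma mem_link : w ∈ link E u v ↔ ({u, v, w} : Finset (Fin n)) ∈ E := by
  simp [link]

lemma link_comm (u v : Fin n) : link E u v = link E v u := by
  ext w
  rw [mem_link, mem_link, insert_comm]

lemma ne_of_mem_link (hE : isEdgeSet E) (h : w ∈ link E u v) : u ≠ v ∧ u ≠ w ∧ v ≠ w :=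
  card_triple_eq_three_iff.1 (hE _ (mem_link.1 h))

lemma left_notMem_link (hE : isEdgeSet E) (u v : Fin n) : u ∉ link E u v :=
  fun h => (ne_of_mem_link hE h).2.1 rfl

lemma right_notMem_link (hE : isEdgeSet E) (u v : Fin n) : v ∉ link E u v :=
  fun h => (ne_of_mem_link hE h).2.2 rfl

lemma mem_Aset : w ∈ Aset E x y z ↔ w ∈ link E x y ∧ w ∈ link E y z ∧ w ∈ link E z x := by
  simp [Aset]

lemma mem_Bset : v ∈ Bset E w x y z ↔ v ∈ link E w x ∧ v ∈ link E w y ∧ v ∈ link E w z := by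
  simp [Bset]

-- `grind` may now read `w ∈ link E u v` as `{u, v, w} ∈ E` with the triple in any order.
attribute [local grind =] mem_link insert_comm pair_comm mem_Aset mem_Bset

/-- Every pair of vertices of a `C5` lies in one of its edges, so distinctness is automatic. -/
lemma hasC5_of_mem_link (hE : isEdgeSet E) (hb : b ∈ link E a c) (hc : c ∈ link E b d)
    (hd : d ∈ link E c e) (he : e ∈ link E d a) (ha : a ∈ link E e b) : hasC5 E := by
  have := ne_of_mem_link hE hb
  have := ne_of_mem_link hE hc
  have := ne_of_mem_link hE hd
  have := ne_of_mem_link hE he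
  have := ne_of_mem_link hE ha
  exact ⟨a, b, c, d, e, by grind, by grind, by grind, by grind, by grind, by grind, by grind,
    by grind, by grind, by grind, by grind, by grind, by grind, by grind, by grind⟩

lemma isK4_of_mem_link (hE : isEdgeSet E) (hc : c ∈ link E a b) (hd : d ∈ link E a b)
    (hd' : d ∈ link E a c) (hd'' : d ∈ link E b c) : isK4 E a b c d := by
  obtain ⟨hab, hac, hbc⟩ := ne_of_mem_link hE hc
  obtain ⟨-, had, hbd⟩ := ne_of_mem_link hE hd
  exact ⟨hab, hac, had, hbc, hbd, (ne_of_mem_link hE hd').2.2, mem_link.1 hc, mem_link.1 hd,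
    mem_link.1 hd', mem_link.1 hd''⟩

lemma isK4.mem_link (h : isK4 E a b c d) : c ∈ link E a b :=
  _root_.mem_link.2 h.2.2.2.2.2.2.1

lemma isK4.swap12 (h : isK4 E a b c d) : isK4 E b a c d := by
  obtain ⟨hab, hac, had, hbc, hbd, hcd, habc, habd, hacd, hbcd⟩ := h
  exact ⟨hab.symm, hbc, hbd, hac, had, hcd, insert_comm a b _ ▸ habc, insert_comm a b _ ▸ habd,
    hbcd, hacd⟩

lemma isK4.swap23 (h : isK4 E a b c d) : isK4 E a c b d := by
  obtain ⟨hab, hac, had, hbc, hbd, hcd, habc, habd, hacd, hbcd⟩ := h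
  exact ⟨hac, hab, had, hbc.symm, hcd, hbd, pair_comm b c ▸ habc, hacd, habd,
    insert_comm b c _ ▸ hbcd⟩

lemma isK4.swap34 (h : isK4 E a b c d) : isK4 E a b d c := by
  obtain ⟨hab, hac, had, hbc, hbd, hcd, habc, habd, hacd, hbcd⟩ := h
  exact ⟨hab, had, hac, hbd, hbc, hcd.symm, habd, habc, pair_comm c d ▸ hacd,
    pair_comm c d ▸ hbcd⟩

lemma isK4.swap_pairs (h : isK4 E a b c d) : isK4 E c d a b :=
  h.swap23.swap12.swap34.swap23

lemma isK4_of_mem_Aset (hE : isEdgeSet E) (hxyz : z ∈ link E x y) (hu : u ∈ Aset E x y z) :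
    isK4 E u x y z := by
  obtain ⟨hxy, hyz, hzx⟩ := mem_Aset.1 hu
  exact isK4_of_mem_link hE (by grind) (by grind) (by grind) hxyz

variable {δ : ℕ}

/-- `δ₂⁺(E) ≥ δ`. -/
def PosCodegreeGE (E : Finset (Finset (Fin n))) (δ : ℕ) : Prop :=
  ∀ u v : Fin n, (link E u v).Nonempty → δ ≤ #(link E u v)

lemma PosCodegreeGE.le_card_link (hδ : PosCodegreeGE E δ) (h : w ∈ link E u v) :
    δ ≤ #(link E u v) :=
  hδ u v ⟨w, h⟩

lemma PosCodegreeGE.inter_link_nonempty (hE : isEdgeSet E) (hδ : PosCodegreeGE E δ)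
    (hn : n ≤ 2 * δ) (h : w ∈ link E u v) : (link E u v ∩ link E u w).Nonempty := by
  have hdisj : Disjoint {u} (link E u v ∪ link E u w) := by
    simp [left_notMem_link hE]
  have := card_add_card_add_card_le hdisj
  have := hδ.le_card_link h
  have := hδ.le_card_link (by grind : v ∈ link E u w)
  rw [← card_pos]
  simp only [card_singleton, Fintype.card_fin] at *
  omega

/-- Otherwise `(t, a, b, s, c)` is a `C5`. -/
lemma notMem_link_of_mem_inter (hE : isEdgeSet E) (hC5 : ¬ hasC5 E)
    (ht : t ∈ link E a b ∩ link E a c) (hs : s ∈ link E b a ∩ link E b c) :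
    t ∉ link E c s := by
  simp only [mem_inter] at ht hs
  exact fun h => hC5 (hasC5_of_mem_link hE (a := t) (b := a) (c := b) (d := s) (e := c)
    (by grind) (by grind) (by grind) (by grind) (by grind))

/-- The new edge is `cbs` for some `s ∈ L_ba ∩ L_bc`: then `insert c (L_ab ∩ L_ac)` misses
`L_cb ∪ L_cs`. -/
lemma exists_card_inter_link_lt (hE : isEdgeSet E) (hC5 : ¬ hasC5 E) (hδ : PosCodegreeGE E δ)
    (hn : n ≤ 2 * δ) (hK4 : ∀ a b c d, ¬ isK4 E a b c d) (habc : c ∈ link E a b) :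
    ∃ a' b' c', c' ∈ link E a' b' ∧
      #(link E a b ∩ link E a c) < #(link E a' b' ∩ link E a' c') := by
  obtain ⟨s, hs⟩ := hδ.inter_link_nonempty hE hn (u := b) (v := a) (w := c) (by grind)
  refine ⟨c, b, s, by grind, ?_⟩
  have hdisj : Disjoint (insert c (link E a b ∩ link E a c)) (link E c b ∪ link E c s) := by
    rw [disjoint_left]
    intro w hw hw'
    rcases mem_insert.1 hw with rfl | hw
    · simp [left_notMem_link hE] at hw'
    rcases mem_union.1 hw' with hw' | hw'
    · exact hK4 a b c w (isK4_of_mem_link hE habc (mem_inter.1 hw).1 (mem_inter.1 hw).2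
        (by grind))
    · exact notMem_link_of_mem_inter hE hC5 hw hs hw'
  have := card_add_card_add_card_le hdisj
  rw [card_insert_of_notMem (fun h => right_notMem_link hE a c (mem_inter.1 h).2),
    Fintype.card_fin] at this
  have := hδ.le_card_link (w := a) (by grind : a ∈ link E c b)
  have := hδ.le_card_link (w := b) (by grind : b ∈ link E c s)
  omega

theorem exists_isK4 (hE : isEdgeSet E) (hC5 : ¬ hasC5 E) (hδ : PosCodegreeGE E δ)
    (hn : n ≤ 2 * δ) (hne : E.Nonempty) : ∃ a b c d, isK4 E a b c d := by
  by_contra! hK4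
  set T := univ.filter fun x : Fin n × Fin n × Fin n => x.2.2 ∈ link E x.1 x.2.1
  have hT : T.Nonempty := by
    obtain ⟨e, he⟩ := hne
    obtain ⟨a, b, c, -, -, -, rfl⟩ := card_eq_three.1 (hE e he)
    exact ⟨(a, b, c), by simpa [T]⟩
  obtain ⟨⟨a, b, c⟩, habc, hmax⟩ :=
    T.exists_max_image (fun x => #(link E x.1 x.2.1 ∩ link E x.1 x.2.2)) hT
  obtain ⟨a', b', c', h, hlt⟩ :=
    exists_card_inter_link_lt hE hC5 hδ hn hK4 (by simpa [T] using habc)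
  exact hlt.not_ge (hmax (a', b', c') (by simpa [T] using h))

/-- The `C5` is `(v, a, b, d, c)`. -/
lemma isK4.notMem_link_of_mem_link (hE : isEdgeSet E) (hC5 : ¬ hasC5 E)
    (hK : isK4 E a b c d) (h₁ : v ∈ link E a b) (h₂ : v ∈ link E c d) : v ∉ link E a c := by
  obtain ⟨-, -, -, -, -, -, -, habd, -, hbcd⟩ := hK
  exact fun h => hC5 (hasC5_of_mem_link hE (a := v) (b := a) (c := b) (d := d) (e := c)
    (by grind) (by grind) (by grind) (by grind) (by grind))

lemma isK4.disjoint_inter_union (hE : isEdgeSet E) (hC5 : ¬ hasC5 E) (hK : isK4 E a b c d) :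
    Disjoint (link E a b ∩ link E c d) (link E a c ∪ link E b d) := by
  rw [disjoint_left]
  intro v hv hv'
  obtain ⟨h₁, h₂⟩ := mem_inter.1 hv
  rcases mem_union.1 hv' with h | h
  · exact hK.notMem_link_of_mem_link hE hC5 h₁ h₂ h
  · rw [link_comm] at h₁ h₂
    exact hK.swap12.swap34.notMem_link_of_mem_link hE hC5 h₁ h₂ h

lemma isK4.card_inter_add_le (hE : isEdgeSet E) (hC5 : ¬ hasC5 E) (hK : isK4 E a b c d) :
    #(link E a b ∩ link E c d) + #(link E a c) + #(link E b d) ≤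
      n + #(link E a c ∩ link E b d) := by
  simpa using card_add_card_add_card_le (hK.disjoint_inter_union hE hC5)

lemma isK4.le_card_link (hδ : PosCodegreeGE E δ) (hK : isK4 E a b c d) :
    δ ≤ #(link E a b) :=
  hδ.le_card_link hK.mem_link

/-- Adding the inequalities of the pairings `ab | cd` and `ac | bd`. -/
theorem isK4.two_mul_le (hE : isEdgeSet E) (hC5 : ¬ hasC5 E) (hδ : PosCodegreeGE E δ)
    (hK : isK4 E a b c d) : 2 * δ ≤ n := by
  have := hK.card_inter_add_le hE hC5
  have := hK.swap23.card_inter_add_le hE hC5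
  have := hK.le_card_link hδ
  have := hK.swap23.le_card_link hδ
  have := hK.swap_pairs.le_card_link hδ
  have := hK.swap23.swap_pairs.le_card_link hδ
  omega

/-- The equality case `n = 2δ` of `isK4.two_mul_le`. -/
structure IsTightC5Free (E : Finset (Finset (Fin n))) (δ : ℕ) : Prop where
  isEdgeSet : isEdgeSet E
  not_hasC5 : ¬ hasC5 E
  posCodegreeGE : PosCodegreeGE E δ
  card_eq : n = 2 * δ

namespace IsTightC5Free

variable {p q r s : Fin n} (H : IsTightC5Free E δ)
include H

lemma card_link_eq (hK : isK4 E a b c d) : #(link E a b) = δ := by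
  have := hK.card_inter_add_le H.isEdgeSet H.not_hasC5
  have := hK.swap23.card_inter_add_le H.isEdgeSet H.not_hasC5
  have := hK.le_card_link H.posCodegreeGE
  have := hK.swap23.le_card_link H.posCodegreeGE
  have := hK.swap_pairs.le_card_link H.posCodegreeGE
  have := hK.swap23.swap_pairs.le_card_link H.posCodegreeGE
  have := H.card_eq
  omega

lemma inter_union_eq_univ (hK : isK4 E a b c d) :
    (link E a b ∩ link E c d) ∪ (link E a c ∪ link E b d) = univ := by
  refine union_eq_univ_of_card_le (hK.disjoint_inter_union H.isEdgeSet H.not_hasC5) ?_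
  have := hK.card_inter_add_le H.isEdgeSet H.not_hasC5
  have := hK.swap23.card_inter_add_le H.isEdgeSet H.not_hasC5
  have := H.card_link_eq hK
  have := H.card_link_eq hK.swap23
  have := H.card_link_eq hK.swap_pairs
  have := H.card_link_eq hK.swap23.swap_pairs
  have := card_union_add_card_inter (link E a c) (link E b d)
  have := H.card_eq
  rw [Fintype.card_fin]
  omega

lemma inter_eq_empty (hK : isK4 E a b c d) : link E a b ∩ link E c d = ∅ := by
  refine eq_empty_of_forall_notMem fun v hv => ?_
  have h₁ := disjoint_left.1 (hK.disjoint_inter_union H.isEdgeSet H.not_hasC5) hv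
  have h₂ := disjoint_left.1 (hK.swap34.disjoint_inter_union H.isEdgeSet H.not_hasC5)
    (by rwa [link_comm d c])
  have h₃ := H.inter_union_eq_univ hK.swap23.swap34 ▸ mem_univ v
  simp only [mem_union, mem_inter, link_comm d b, link_comm c b] at h₁ h₂ h₃
  tauto

lemma mem_link_iff_notMem_link (hK : isK4 E a b c d) : v ∈ link E a b ↔ v ∉ link E c d := by
  refine ⟨fun h₁ h₂ => ?_, fun h => ?_⟩
  · simpa [H.inter_eq_empty hK] using mem_inter.2 ⟨h₁, h₂⟩
  · have h₁ := H.inter_union_eq_univ hK.swap23 ▸ mem_univ v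
    simp only [mem_union, H.inter_eq_empty hK.swap23, notMem_empty, false_or] at h₁
    tauto

lemma mem_link_iff_of_isK4 (hK : isK4 E p q r s) :
    (∀ w, w ∈ link E q r ↔ w ∉ link E p s) ∧ (∀ w, w ∈ link E q s ↔ w ∉ link E p r) ∧
      (∀ w, w ∈ link E r s ↔ w ∉ link E p q) :=
  ⟨fun _ => iff_not_comm.1 (H.mem_link_iff_notMem_link hK.swap34.swap23),
    fun _ => iff_not_comm.1 (H.mem_link_iff_notMem_link hK.swap23),
    fun _ => iff_not_comm.1 (H.mem_link_iff_notMem_link hK)⟩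

lemma link_eq_link (hK₁ : isK4 E u a b c) (hK₂ : isK4 E w a b c) : link E u a = link E w a := by
  ext v
  rw [H.mem_link_iff_notMem_link hK₁, H.mem_link_iff_notMem_link hK₂]

lemma link_eq_link_of_mem_Aset (hK : isK4 E p q r s) (hu : u ∈ Aset E q r s) :
    link E u q = link E p q :=
  H.link_eq_link (isK4_of_mem_Aset H.isEdgeSet (by grind [isK4]) hu) hK

lemma notMem_link_of_mem_Aset (hxyz : z ∈ link E x y) (hu : u ∈ Aset E x y z)
    (ht : t ∈ link E u x) : t ∉ link E y z :=
  (H.mem_link_iff_notMem_link (isK4_of_mem_Aset H.isEdgeSet hxyz hu)).1 ht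

lemma mem_link_of_mem_Bset_of_mem_Aset (hK : isK4 E p q r s) (hv : v ∈ Bset E p q r s)
    (hu : u ∈ Aset E q r s) : u ∈ link E v q := by
  have : v ∈ link E u q := H.link_eq_link_of_mem_Aset hK hu ▸ (mem_Bset.1 hv).1
  grind

/-- The `C5` is `(q, p, v, u, r)`. -/
lemma notMem_link_of_mem_Bset_of_mem_Aset (hK : isK4 E p q r s) (hv : v ∈ Bset E p q r s)
    (hu : u ∈ Aset E q r s) : u ∉ link E v p := by
  have hur := H.mem_link_of_mem_Bset_of_mem_Aset hK.swap23
    (by grind : v ∈ Bset E p r q s) (by grind : u ∈ Aset E r q s)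
  have hvpq := (mem_Bset.1 hv).1
  have huqr := (mem_Aset.1 hu).1
  exact fun h => H.not_hasC5 (hasC5_of_mem_link H.isEdgeSet (a := q) (b := p) (c := v) (d := u)
    (e := r) (by grind) (by grind) (by grind) (by grind) (by grind [isK4]))

/-- The three `C5`s are `(t, v, r, p, q)`, `(t, v, q, p, r)` and `(v, q, t, s, p)`. -/
lemma mem_Aset_of_mem_link (hK : isK4 E p q r s) (hv : v ∈ Bset E p q r s)
    (hq : t ∈ link E v q) (hr : t ∈ link E v r) : t ∈ Aset E q r s := by
  obtain ⟨h₁, h₂, h₃⟩ := H.mem_link_iff_of_isK4 hK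
  obtain ⟨hvq, hvr, hvs⟩ := mem_Bset.1 hv
  have hE := H.isEdgeSet
  have hC5 := H.not_hasC5
  have hpq : t ∉ link E p q := fun h => hC5 (hasC5_of_mem_link hE (a := t) (b := v) (c := r)
    (d := p) (e := q) (by grind) (by grind) (by grind [isK4]) (by grind) (by grind))
  have hpr : t ∉ link E p r := fun h => hC5 (hasC5_of_mem_link hE (a := t) (b := v) (c := q)
    (d := p) (e := r) (by grind) (by grind) (by grind [isK4]) (by grind) (by grind))
  have hqs : t ∈ link E q s := (h₂ t).2 hpr
  have hps : t ∉ link E p s := fun h => hC5 (hasC5_of_mem_link hE (a := v) (b := q) (c := t)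
    (d := s) (e := p) (by grind) hqs (by grind) (by grind) hvq)
  exact mem_Aset.2 ⟨(h₁ t).2 hps, (h₃ t).2 hpq, by grind⟩

lemma inter_link_eq_Aset (hK : isK4 E p q r s) (hv : v ∈ Bset E p q r s) :
    link E v q ∩ link E v r = Aset E q r s := by
  ext t
  refine ⟨fun ht => H.mem_Aset_of_mem_link hK hv (mem_inter.1 ht).1 (mem_inter.1 ht).2,
    fun ht => mem_inter.2 ⟨H.mem_link_of_mem_Bset_of_mem_Aset hK hv ht, ?_⟩⟩
  exact H.mem_link_of_mem_Bset_of_mem_Aset hK.swap23 (by grind : v ∈ Bset E p r q s)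
    (by grind)

/-- `L_vq`, `L_vr`, `L_vs` pairwise meet in `A_p` and avoid `v, q, r, s`. -/
lemma le_two_mul_card_Aset (hK : isK4 E p q r s) (hv : v ∈ Bset E p q r s) :
    δ + 4 ≤ 2 * #(Aset E q r s) := by
  have hqr := H.inter_link_eq_Aset hK hv
  have hqs : link E v q ∩ link E v s = Aset E q r s := by
    rw [H.inter_link_eq_Aset hK.swap34 (by grind : v ∈ Bset E p q s r)]
    ext
    grind
  have hrs : link E v r ∩ link E v s = Aset E q r s := by
    rw [H.inter_link_eq_Aset hK.swap23.swap34 (by grind : v ∈ Bset E p r s q)]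
    ext
    grind
  obtain ⟨h₁, h₂, h₃⟩ := H.mem_link_iff_of_isK4 hK
  obtain ⟨hvq, hvr, hvs⟩ := mem_Bset.1 hv
  have hE := H.isEdgeSet
  have : v ∉ link E q r := fun h => (h₁ v).1 h hvs
  have : v ∉ link E q s := fun h => (h₂ v).1 h hvr
  have : v ∉ link E r s := fun h => (h₃ v).1 h hvq
  have hdisj : Disjoint {v, q, r, s} (link E v q ∪ link E v r ∪ link E v s) := by
    simp only [disjoint_left, mem_insert, mem_singleton, mem_union]
    rintro w (rfl | rfl | rfl | rfl)
    · simp [left_notMem_link hE]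
    all_goals grind [right_notMem_link]
  have hcard : #({v, q, r, s} : Finset (Fin n)) = 4 := by
    obtain ⟨hpq, -, -, hqr, hqs, hrs, -⟩ := hK
    have := ne_of_mem_link hE (mem_Bset.1 hv).1
    have := ne_of_mem_link hE (mem_Bset.1 hv).2.1
    have := ne_of_mem_link hE (mem_Bset.1 hv).2.2
    rw [card_insert_of_notMem (by grind), card_insert_of_notMem (by grind), card_pair hrs]
  have := card_union_of_disjoint hdisj
  have := card_le_univ ({v, q, r, s} ∪ (link E v q ∪ link E v r ∪ link E v s))
  have := card_union_add_two_mul hqr hqs hrs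
  have := H.posCodegreeGE.le_card_link (by grind : p ∈ link E v q)
  have := H.posCodegreeGE.le_card_link (by grind : p ∈ link E v r)
  have := H.posCodegreeGE.le_card_link (by grind : p ∈ link E v s)
  have := H.card_eq
  simp only [Fintype.card_fin] at *
  omega

lemma Bset_eq_empty_of_nonempty (hK : isK4 E p q r s) (hp : (Bset E p q r s).Nonempty) :
    Bset E q p r s = ∅ := by
  obtain ⟨v, hv⟩ := hp
  refine eq_empty_of_forall_notMem fun u hu => ?_
  obtain ⟨h₁, -, -⟩ := H.mem_link_iff_of_isK4 hK
  have hsub : Aset E q r s ∪ Aset E p r s ⊆ link E r s := by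
    intro w
    grind
  have hdisj : Disjoint (Aset E q r s) (Aset E p r s) := by
    rw [disjoint_left]
    intro w
    grind
  have := card_le_card hsub
  rw [card_union_of_disjoint hdisj, H.card_link_eq hK.swap_pairs] at this
  have := H.le_two_mul_card_Aset hK hv
  have := H.le_two_mul_card_Aset hK.swap12 hu
  omega

/-- At most one of the four `B`-sets of a `K4` is nonempty; relabel so that it is `B_a`. -/
lemma exists_isK4_Bset_eq_empty (hK : isK4 E p q r s) :
    ∃ a b c d, isK4 E a b c d ∧ Bset E b a c d = ∅ ∧ Bset E c a b d = ∅ ∧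
      Bset E d a b c = ∅ := by
  have key : ∀ {a b c d}, isK4 E a b c d → (Bset E a b c d).Nonempty → ∃ a b c d,
      isK4 E a b c d ∧ Bset E b a c d = ∅ ∧ Bset E c a b d = ∅ ∧ Bset E d a b c = ∅ := by
    intro a b c d hK ⟨v, hv⟩
    exact ⟨a, b, c, d, hK, H.Bset_eq_empty_of_nonempty hK ⟨v, hv⟩,
      H.Bset_eq_empty_of_nonempty hK.swap23 ⟨v, by grind⟩,
      H.Bset_eq_empty_of_nonempty hK.swap34.swap23 ⟨v, by grind⟩⟩
  by_cases hq : (Bset E q p r s).Nonempty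
  · exact key hK.swap12 hq
  by_cases hr : (Bset E r p q s).Nonempty
  · exact key hK.swap23.swap12 hr
  by_cases hs : (Bset E s p q r).Nonempty
  · exact key hK.swap34.swap23.swap12 hs
  exact ⟨p, q, r, s, hK, not_nonempty_iff_eq_empty.1 hq, not_nonempty_iff_eq_empty.1 hr,
    not_nonempty_iff_eq_empty.1 hs⟩

section OneBset

variable (hK : isK4 E p q r s) (hBq : Bset E q p r s = ∅) (hBr : Bset E r p q s = ∅)
  (hBs : Bset E s p q r = ∅)
include hK hBq hBr hBs

lemma card_Aset_eq :
    #(Aset E q r s) + #(Aset E p q r) = δ ∧ #(Aset E q r s) + #(Aset E p q s) = δ ∧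
      #(Aset E q r s) + #(Aset E p r s) = δ ∧
      #(Aset E p q s) + #(Aset E p q r) + #(Bset E p q r s) = δ := by
  obtain ⟨h₁, h₂, h₃⟩ := H.mem_link_iff_of_isK4 hK
  have hB : ∀ w, w ∉ Bset E q p r s ∧ w ∉ Bset E r p q s ∧ w ∉ Bset E s p q r := by
    simp [hBq, hBr, hBs]
  refine ⟨?_, ?_, ?_, ?_⟩
  · rw [← H.card_link_eq hK.swap12.swap23, ← card_union_of_disjoint
      (disjoint_left.2 fun w => by grind)]
    congr 1
    ext w
    have := hB w
    grind
  · rw [← H.card_link_eq hK.swap23.swap_pairs, ← card_union_of_disjoint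
      (disjoint_left.2 fun w => by grind)]
    congr 1
    ext w
    have := hB w
    grind
  · rw [← H.card_link_eq hK.swap_pairs, ← card_union_of_disjoint
      (disjoint_left.2 fun w => by grind)]
    congr 1
    ext w
    have := hB w
    grind
  · rw [← H.card_link_eq hK, ← card_union_of_disjoint (disjoint_left.2 fun w => by grind),
      ← card_union_of_disjoint (disjoint_left.2 fun w => by grind)]
    congr 1
    ext w
    have := hB w
    grind

/-- `L_tq ⊆ (A_q ∪ B_p) \ {q, t}`, which is too small for a nonempty link. -/
lemma link_eq_empty_of_mem_Aset (ht : t ∈ Aset E p r s) : link E t q = ∅ := by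
  refine eq_empty_of_forall_notMem fun w₀ hw₀ => ?_
  have hE := H.isEdgeSet
  obtain ⟨h₁, h₂, h₃⟩ := H.mem_link_iff_of_isK4 hK
  have hsub : link E t q ⊆ ((Aset E p r s ∪ Bset E p q r s).erase t).erase q := by
    intro w hw
    have hwq : t ∈ link E w q := by grind
    have hp : w ∉ Aset E q r s := fun hw' =>
      H.notMem_link_of_mem_Aset (by grind [isK4]) hw' hwq (by grind)
    have hr : w ∉ Aset E p q s := fun hw' =>
      H.notMem_link_of_mem_Aset (by grind [isK4]) (by grind : w ∈ Aset E q p s) hwq (by grind)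
    have hs : w ∉ Aset E p q r := fun hw' =>
      H.notMem_link_of_mem_Aset (by grind [isK4]) (by grind : w ∈ Aset E q p r) hwq (by grind)
    have : w ∉ Bset E q p r s ∧ w ∉ Bset E r p q s ∧ w ∉ Bset E s p q r := by
      simp [hBq, hBr, hBs]
    have := ne_of_mem_link hE hw
    simp only [mem_erase, mem_union]
    grind
  have := card_le_card hsub
  rw [card_erase_of_mem (by grind [ne_of_mem_link]), card_erase_of_mem (by grind),
    card_union_of_disjoint (disjoint_left.2 fun w => by grind)] at this
  have := H.posCodegreeGE.le_card_link hw₀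
  have := H.card_Aset_eq hK hBq hBr hBs
  have := card_pos.2 ⟨t, ht⟩
  omega

lemma link_eq_Aset_union_filter (hv : v ∈ Bset E p q r s) :
    link E v q = Aset E q r s ∪ {w ∈ Bset E p q r s | w ∈ link E v q} := by
  obtain ⟨h₁, h₂, h₃⟩ := H.mem_link_iff_of_isK4 hK
  ext w
  refine ⟨fun hw => ?_, fun hw => ?_⟩
  · have hwq : v ∈ link E w q := by grind
    have hq : w ∉ Aset E p r s := fun hw' => by
      simp [H.link_eq_empty_of_mem_Aset hK hBq hBr hBs hw'] at hwq
    have hr : w ∉ Aset E p q s := fun hw' =>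
      H.notMem_link_of_mem_Aset (by grind [isK4]) (by grind : w ∈ Aset E q p s) hwq (by grind)
    have hs : w ∉ Aset E p q r := fun hw' =>
      H.notMem_link_of_mem_Aset (by grind [isK4]) (by grind : w ∈ Aset E q p r) hwq (by grind)
    have : w ∉ Bset E q p r s ∧ w ∉ Bset E r p q s ∧ w ∉ Bset E s p q r := by
      simp [hBq, hBr, hBs]
    simp only [mem_union, mem_filter]
    grind
  · rcases mem_union.1 hw with hw | hw
    · exact H.mem_link_of_mem_Bset_of_mem_Aset hK hv hw
    · exact (mem_filter.1 hw).2

lemma link_eq_Asets_union_filter (hv : v ∈ Bset E p q r s) :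
    link E v p = Aset E p r s ∪ Aset E p q s ∪ Aset E p q r ∪
      {w ∈ Bset E p q r s | w ∈ link E v p} := by
  obtain ⟨h₁, h₂, h₃⟩ := H.mem_link_iff_of_isK4 hK
  ext w
  refine ⟨fun hw => ?_, fun hw => ?_⟩
  · have hp : w ∉ Aset E q r s := fun hw' => H.notMem_link_of_mem_Bset_of_mem_Aset hK hv hw' hw
    have : w ∉ Bset E q p r s ∧ w ∉ Bset E r p q s ∧ w ∉ Bset E s p q r := by
      simp [hBq, hBr, hBs]
    simp only [mem_union, mem_filter]
    grind
  · simp only [mem_union, mem_filter] at hw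
    rcases hw with ((hw | hw) | hw) | hw
    · have := H.link_eq_link_of_mem_Aset hK.swap12 hw
      have : v ∈ link E w p := this ▸ (by grind)
      grind
    · have := H.link_eq_link_of_mem_Aset hK.swap23.swap12 hw
      have : v ∈ link E w p := this ▸ (by grind)
      grind
    · have := H.link_eq_link_of_mem_Aset hK.swap34.swap23.swap12 hw
      have : v ∈ link E w p := this ▸ (by grind)
      grind
    · exact hw.2

/-- A common neighbour `w₀` of `v` through `p` and `q` lies in `B_p`, so `vpqw₀` is a `K4`. -/
lemma card_link_eq_of_mem_Bset (hv : v ∈ Bset E p q r s) :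
    #(link E v p) = δ ∧ #(link E v q) = δ := by
  have hE := H.isEdgeSet
  have hvpq : q ∈ link E v p := by grind
  obtain ⟨w₀, hw₀⟩ := H.posCodegreeGE.inter_link_nonempty hE H.card_eq.le hvpq
  obtain ⟨hp, hq⟩ := mem_inter.1 hw₀
  have hw₀B : w₀ ∈ Bset E p q r s := by
    rcases mem_union.1 (H.link_eq_Aset_union_filter hK hBq hBr hBs hv ▸ hq) with hA | hB
    · exact absurd hp (H.notMem_link_of_mem_Bset_of_mem_Aset hK hv hA)
    · exact (mem_filter.1 hB).1
  have hK' := isK4_of_mem_link hE hvpq hp hq (mem_Bset.1 hw₀B).1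
  exact ⟨H.card_link_eq hK', H.card_link_eq hK'.swap23⟩

lemma card_filter_mem_link_add_card_Aset (hv : v ∈ Bset E p q r s) :
    #{w ∈ Bset E p q r s | w ∈ link E v q} + #(Aset E q r s) = δ := by
  obtain ⟨h₁, h₂, h₃⟩ := H.mem_link_iff_of_isK4 hK
  have := congrArg card (H.link_eq_Aset_union_filter hK hBq hBr hBs hv)
  rw [(H.card_link_eq_of_mem_Bset hK hBq hBr hBs hv).2,
    card_union_of_disjoint (disjoint_left.2 fun w => by grind)] at this
  omega

lemma card_filter_mem_link_add_sum_card_Aset (hv : v ∈ Bset E p q r s) :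
    #{w ∈ Bset E p q r s | w ∈ link E v p} +
      (#(Aset E p r s) + #(Aset E p q s) + #(Aset E p q r)) = δ := by
  obtain ⟨h₁, h₂, h₃⟩ := H.mem_link_iff_of_isK4 hK
  have := congrArg card (H.link_eq_Asets_union_filter hK hBq hBr hBs hv)
  rw [(H.card_link_eq_of_mem_Bset hK hBq hBr hBs hv).1,
    card_union_of_disjoint (disjoint_left.2 fun w => by grind),
    card_union_of_disjoint (disjoint_left.2 fun w => by grind),
    card_union_of_disjoint (disjoint_left.2 fun w => by grind)] at this
  omega

/-- `|B_p| = δ - 2|A_q|` is odd if `δ` is, and the link graphs of `q` and `p` are regular on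
`B_p` of degrees `|A_q|` and `δ - 3|A_q|`, which cannot both be even. -/
lemma even_of_isK4 : Even δ := by
  have hE := H.isEdgeSet
  obtain ⟨hqr, hqs, hrs, hpq⟩ := H.card_Aset_eq hK hBq hBr hBs
  by_contra hodd
  rw [Nat.not_even_iff_odd, Nat.odd_iff] at hodd
  have hB : ¬ Even #(Bset E p q r s) := by
    rw [Nat.not_even_iff_odd, Nat.odd_iff]
    omega
  obtain ⟨v₀, hv₀⟩ : (Bset E p q r s).Nonempty := by
    rw [← card_pos]
    grind
  have hv₀p := H.card_filter_mem_link_add_sum_card_Aset hK hBq hBr hBs hv₀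
  have hsymm : ∀ x v w : Fin n, w ∈ link E v x → v ∈ link E w x := by grind
  have hirrefl : ∀ x v : Fin n, v ∉ link E v x := fun x v => left_notMem_link hE v x
  have hq := (Nat.even_mul.1 (even_card_mul_of_forall_card_filter_eq (hsymm q) (hirrefl q)
    fun v hv => by
      have := H.card_filter_mem_link_add_card_Aset hK hBq hBr hBs hv
      exact (Nat.eq_sub_of_add_eq this : _ = δ - #(Aset E q r s)))).resolve_left hB
  have hp := (Nat.even_mul.1 (even_card_mul_of_forall_card_filter_eq (hsymm p) (hirrefl p)
    fun v hv => Nat.eq_sub_of_add_eq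
      (H.card_filter_mem_link_add_sum_card_Aset hK hBq hBr hBs hv))).resolve_left hB
  rw [Nat.even_iff] at hq hp
  omega

end OneBset

theorem even (hne : E.Nonempty) : Even δ := by
  obtain ⟨p, q, r, s, hK⟩ :=
    exists_isK4 H.isEdgeSet H.not_hasC5 H.posCodegreeGE H.card_eq.le hne
  obtain ⟨a, b, c, d, hK, hb, hc, hd⟩ := H.exists_isK4_Bset_eq_empty hK
  exact H.even_of_isK4 hK hb hc hd

end IsTightC5Free

theorem two_mul_le_of_posCodegreeGE (hE : isEdgeSet E) (hne : E.Nonempty) (hC5 : ¬ hasC5 E)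
    (hδ : PosCodegreeGE E δ) : 2 * δ ≤ n ∧ (n = 2 * δ → Even δ) := by
  refine ⟨?_, fun hn => IsTightC5Free.even ⟨hE, hC5, hδ, hn⟩ hne⟩
  by_contra! h
  obtain ⟨a, b, c, d, hK⟩ := exists_isK4 hE hC5 hδ h.le hne
  exact (hK.two_mul_le hE hC5 hδ).not_gt h

/-- The balanced blow-up of `K4^(3)`: vertex `i` has colour `i % 4` and the edges are the
triples with three colours. -/
def blowupK4 (n : ℕ) : Finset (Finset (Fin n)) :=
  {e | #e = 3 ∧ #(e.image fun i : Fin n => (i : ℕ) % 4) = 3}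

def blowupK4Part (n r : ℕ) : Finset (Fin n) :=
  {i | (i : ℕ) % 4 = r}

lemma blowupK4_isEdgeSet : isEdgeSet (blowupK4 n) :=
  fun _ he => (mem_filter.1 he).2.1

lemma mem_link_blowupK4 :
    w ∈ link (blowupK4 n) u v ↔
      (u : ℕ) % 4 ≠ v % 4 ∧ (u : ℕ) % 4 ≠ w % 4 ∧ (v : ℕ) % 4 ≠ w % 4 := by
  simp only [mem_link, blowupK4, mem_filter, mem_univ, true_and, image_insert, image_singleton,
    card_triple_eq_three_iff]
  grind

lemma blowupK4_nonempty (hn : 3 ≤ n) : (blowupK4 n).Nonempty :=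
  ⟨{⟨0, by omega⟩, ⟨1, by omega⟩, ⟨2, by omega⟩},
    mem_link.1 (mem_link_blowupK4.2 (by simp))⟩

lemma not_hasC5_blowupK4 : ¬ hasC5 (blowupK4 n) := by
  rintro ⟨a, b, c, d, e, -, -, -, -, -, -, -, -, -, -, h₁, h₂, h₃, h₄, h₅⟩
  simp only [← mem_link, mem_link_blowupK4] at h₁ h₂ h₃ h₄ h₅
  omega

lemma le_card_blowupK4Part {r : ℕ} (hr : r < 4) :
    (n + 3 - r) / 4 ≤ #(blowupK4Part n r) := by
  have := card_le_card_of_injOn (s := (univ : Finset (Fin ((n + 3 - r) / 4))))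
    (t := blowupK4Part n r) (fun j => ⟨4 * j + r, by omega⟩)
    (fun j _ => by simp [blowupK4Part]; omega)
    (fun j _ j' _ h => by simp at h; exact Fin.ext (by omega))
  simpa using this

lemma posCodegreeGE_blowupK4 : PosCodegreeGE (blowupK4 n) (n / 4 + (n + 1) / 4) := by
  rintro u v ⟨w₀, hw₀⟩
  have huv := (mem_link_blowupK4.1 hw₀).1
  have hcard : 1 < #(((range 4).erase ((u : ℕ) % 4)).erase ((v : ℕ) % 4)) := by
    have := pred_card_le_card_erase (s := (range 4).erase ((u : ℕ) % 4)) (a := (v : ℕ) % 4)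
    have := pred_card_le_card_erase (s := range 4) (a := (u : ℕ) % 4)
    simp only [card_range] at *
    omega
  obtain ⟨r, hr, s, hs, hrs⟩ := one_lt_card.1 hcard
  simp only [mem_erase, mem_range] at hr hs
  have hsub : blowupK4Part n r ∪ blowupK4Part n s ⊆ link (blowupK4 n) u v := by
    intro w hw
    simp only [blowupK4Part, mem_union, mem_filter, mem_univ, true_and] at hw
    exact mem_link_blowupK4.2 (by omega)
  have := card_le_card hsub
  rw [card_union_of_disjoint (disjoint_left.2 fun i h h' =>
    hrs ((mem_filter.1 h).2.symm.trans (mem_filter.1 h').2))] at this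
  have := le_card_blowupK4Part (n := n) hr.2.2
  have := le_card_blowupK4Part (n := n) hs.2.2
  omega

/-- for `n ≥ 6`, `co⁺ex(n, C5) = 2k` if `n ∈ {4k, 4k+1, 4k+2}` and
`co⁺ex(n, C5) = 2k+1` if `n = 4k+3`. -/
theorem stmt_19 (n k : ℕ) (hn : 6 ≤ n) :
    ((n = 4 * k ∨ n = 4 * k + 1 ∨ n = 4 * k + 2) →
      (∃ E : Finset (Finset (Fin n)), isEdgeSet E ∧ E.Nonempty ∧ ¬ hasC5 E ∧
        ∀ u v : Fin n, (link E u v).Nonempty → 2 * k ≤ (link E u v).card) ∧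
      (∀ E : Finset (Finset (Fin n)), isEdgeSet E → E.Nonempty → ¬ hasC5 E →
        ∃ u v : Fin n, (link E u v).Nonempty ∧ (link E u v).card ≤ 2 * k)) ∧
    (n = 4 * k + 3 →
      (∃ E : Finset (Finset (Fin n)), isEdgeSet E ∧ E.Nonempty ∧ ¬ hasC5 E ∧
        ∀ u v : Fin n, (link E u v).Nonempty → 2 * k + 1 ≤ (link E u v).card) ∧
      (∀ E : Finset (Finset (Fin n)), isEdgeSet E → E.Nonempty → ¬ hasC5 E →
        ∃ u v : Fin n, (link E u v).Nonempty ∧ (link E u v).card ≤ 2 * k + 1)) := by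
  have lower (m : ℕ) (hm : m ≤ n / 4 + (n + 1) / 4) : ∃ E : Finset (Finset (Fin n)),
      isEdgeSet E ∧ E.Nonempty ∧ ¬ hasC5 E ∧ PosCodegreeGE E m :=
    ⟨blowupK4 n, blowupK4_isEdgeSet, blowupK4_nonempty (by omega), not_hasC5_blowupK4,
      fun u v h => hm.trans (posCodegreeGE_blowupK4 u v h)⟩
  have upper (m : ℕ) (hm : ¬ (2 * (m + 1) ≤ n ∧ (n = 2 * (m + 1) → Even (m + 1))))
      (E : Finset (Finset (Fin n))) (hE : isEdgeSet E) (hne : E.Nonempty) (hC5 : ¬ hasC5 E) :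
      ∃ u v : Fin n, (link E u v).Nonempty ∧ #(link E u v) ≤ m := by
    by_contra! h
    exact hm (two_mul_le_of_posCodegreeGE hE hne hC5 h)
  refine ⟨fun hk => ⟨lower _ (by omega), upper _ ?_⟩,
    fun hk => ⟨lower _ (by omega), upper _ ?_⟩⟩
  · rintro ⟨h, heven⟩
    have := Nat.even_iff.1 (heven (by omega))
    omega
  · omega
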